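/- arXiv:2312.02760 — 7 statements merged into one kernel-verified Lean document; each statement's English description precedes it below -/
import Mathlib

section
/- The function Φ(x) = 2 sin(2x)/(2 - cos(2x)) satisfies Φ'' + Φ^3/sin^2 x = 0 on (0, π/2), with Φ(0) = 0 and the Dirichlet condition Φ(π/2) = 0. -/
open Real

/-! In the double angle `y = 2x` one finds
`Φ'' = -16 sin y (1 + cos y) / (2 - cos y)³`, while `sin² x = (1 - cos y) / 2` and
`sin² y = (1 - cos y)(1 + cos y)` give `Φ³ / sin² x = 16 sin y (1 + cos y) / (2 - cos y)³`. -/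

lemma two_sub_cos_pos (y : ℝ) : 0 < 2 - cos y := by
  linarith [cos_le_one y]

lemma hasDerivAt_sin_two_mul (x : ℝ) :
    HasDerivAt (fun x => sin (2 * x)) (2 * cos (2 * x)) x := by
  simpa [mul_comm] using ((hasDerivAt_id x).const_mul 2).sin

lemma hasDerivAt_cos_two_mul (x : ℝ) :
    HasDerivAt (fun x => cos (2 * x)) (-(2 * sin (2 * x))) x := by
  simpa [mul_comm] using ((hasDerivAt_id x).const_mul 2).cos

lemma hasDerivAt_static_solution (x : ℝ) :
    HasDerivAt (fun x => 2 * sin (2 * x) / (2 - cos (2 * x)))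
      ((8 * cos (2 * x) - 4) / (2 - cos (2 * x)) ^ 2) x := by
  refine (((hasDerivAt_sin_two_mul x).const_mul 2).div
    ((hasDerivAt_cos_two_mul x).const_sub 2) (two_sub_cos_pos (2 * x)).ne').congr_deriv ?_
  rw [div_left_inj' (pow_ne_zero 2 (two_sub_cos_pos (2 * x)).ne')]
  linear_combination -4 * sin_sq_add_cos_sq (2 * x)

lemma hasDerivAt_static_solution_deriv (x : ℝ) :
    HasDerivAt (fun x => (8 * cos (2 * x) - 4) / (2 - cos (2 * x)) ^ 2)
      (-16 * sin (2 * x) * (1 + cos (2 * x)) / (2 - cos (2 * x)) ^ 3) x := by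
  have hD := (two_sub_cos_pos (2 * x)).ne'
  refine ((((hasDerivAt_cos_two_mul x).const_mul 8).sub_const 4).div
    (((hasDerivAt_cos_two_mul x).const_sub 2).fun_pow 2) (pow_ne_zero 2 hD)).congr_deriv ?_
  field_simp
  ring

/-- `Φ(x) = 2 sin(2x)/(2 - cos(2x))` satisfies `Φ'' + Φ³/sin²x = 0` on
`(0, π/2)`, with `Φ(0) = 0` and the Dirichlet condition `Φ(π/2) = 0`. -/
theorem stmt_3 (Φ : ℝ → ℝ)
    (hΦ : ∀ x, Φ x = 2 * Real.sin (2 * x) / (2 - Real.cos (2 * x))) :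
    (∀ x ∈ Set.Ioo 0 (π / 2),
      deriv (deriv Φ) x + (Φ x) ^ 3 / (Real.sin x) ^ 2 = 0) ∧
    Φ 0 = 0 ∧ Φ (π / 2) = 0 := by
  have hΦ' : deriv Φ = fun x => (8 * cos (2 * x) - 4) / (2 - cos (2 * x)) ^ 2 :=
    funext fun x => ((funext hΦ).symm ▸ hasDerivAt_static_solution x).deriv
  refine ⟨fun x hx => ?_, by simp [hΦ], by simp [hΦ, mul_div_cancel₀]⟩
  have hsin : 0 < sin x := sin_pos_of_pos_of_lt_pi hx.1 (by linarith [hx.2, pi_pos])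
  have hcos : 1 - cos (2 * x) ≠ 0 := by nlinarith [sin_sq_eq_half_sub x, pow_pos hsin 2]
  rw [hΦ', (hasDerivAt_static_solution_deriv x).deriv, sin_sq_eq_half_sub, hΦ]
  have hD := (two_sub_cos_pos (2 * x)).ne'
  field_simp
  linear_combination (16 * sin (2 * x)) * sin_sq_add_cos_sq (2 * x)
end

section
/- The function Φ(x) = √2 · tan x satisfies the defocusing static equation Φ'' - Φ^3/sin^2 x = 0 on (0, π/2), with Φ(0) = 0. -/
/-!
Since `tan'' = 2 sin / cos³` and `tan³ / sin² = sin / cos³`, the multiple `c · tan` solves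
`s'' = s³ / sin²` exactly when `2c = c³`, i.e. for `c = √2`.
-/

open Real

theorem Real.hasDerivAt_deriv_tan {x : ℝ} (hx : cos x ≠ 0) :
    HasDerivAt (deriv tan) (2 * sin x / cos x ^ 3) x := by
  have hcos_sq : HasDerivAt (fun y => cos y ^ 2) (2 * cos x * -sin x) x := by
    simpa using (hasDerivAt_cos x).fun_pow 2
  have hsec_sq :
      HasDerivAt (fun y => 1 / cos y ^ 2) (-(2 * cos x * -sin x) / (cos x ^ 2) ^ 2) x := by
    simpa only [one_div] using hcos_sq.fun_inv (pow_ne_zero 2 hx)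
  rw [funext deriv_tan]
  exact hsec_sq.congr_deriv (by field_simp)

theorem Real.deriv_deriv_tan {x : ℝ} (hx : cos x ≠ 0) :
    deriv (deriv tan) x = 2 * sin x / cos x ^ 3 :=
  (hasDerivAt_deriv_tan hx).deriv

/-- `Φ(x) = √2 · tan x` satisfies the defocusing static equation
`Φ'' - Φ³/sin²x = 0` on `(0, π/2)`, with `Φ(0) = 0`. -/
theorem stmt_4 (Φ : ℝ → ℝ) (hΦ : ∀ x, Φ x = Real.sqrt 2 * Real.tan x) :
    (∀ x ∈ Set.Ioo 0 (π / 2),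
      deriv (deriv Φ) x - (Φ x) ^ 3 / (Real.sin x) ^ 2 = 0) ∧
    Φ 0 = 0 := by
  obtain rfl : Φ = fun x => √2 * tan x := funext hΦ
  refine ⟨fun x ⟨hx0, hxπ⟩ => ?_, by simp⟩
  have hcos : cos x ≠ 0 := (cos_pos_of_mem_Ioo ⟨by linarith [pi_pos], hxπ⟩).ne'
  have hsin : sin x ≠ 0 := (sin_pos_of_pos_of_lt_pi hx0 (by linarith [pi_pos])).ne'
  have hsqrt_cube : √2 ^ 3 = 2 * √2 := by
    rw [pow_succ, sq_sqrt zero_le_two]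
  simp only [deriv_const_mul_field']
  rw [deriv_deriv_tan hcos, mul_pow, hsqrt_cube, tan_eq_sin_div_cos]
  field_simp
  ring
end

section
/- There is no nontrivial C^2 solution s : [0, π/2] → ℝ of the defocusing static equation s'' = s^3/sin^2 x with s(0) = 0 satisfying the Robin boundary condition s'(π/2) + b·s(π/2) = 0 for any b ≥ 0 (in particular for Dirichlet s(π/2) = 0 or Neumann s'(π/2) = 0): any such solution is identically zero. -/
open Real MeasureTheory

/-!
Multiplying the equation by `s` and integrating by parts gives the energy identity
`∫ (s'² + s⁴/sin²x) = [s s']₀^{π/2} = -b s(π/2)² ≤ 0`. Both integrands are nonnegative, so the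
continuous function `s'` vanishes on `[0, π/2]`, and `s` is constant, equal to `s 0 = 0`.
-/

open Set intervalIntegral

section EnergyIdentity

variable {s s' s'' : ℝ → ℝ} {a b : ℝ}

theorem integral_deriv_sq_add_mul_eq (hab : a ≤ b)
    (hs : ∀ x ∈ Icc a b, HasDerivAt s (s' x) x) (hs' : ∀ x ∈ Ioo a b, HasDerivAt s' (s'' x) x)
    (hcont : ContinuousOn s' (Icc a b))
    (hint : IntervalIntegrable (fun x => s x * s'' x) volume a b) :
    ∫ x in a..b, (s' x ^ 2 + s x * s'' x) = s b * s' b - s a * s' a := by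
  have hsc : ContinuousOn s (Icc a b) := fun x hx => (hs x hx).continuousAt.continuousWithinAt
  refine integral_eq_sub_of_hasDeriv_right_of_le hab (hsc.mul hcont) (fun x hx => ?_)
    (((hcont.pow 2).intervalIntegrable_of_Icc hab).add hint)
  convert ((hs x (Ioo_subset_Icc_self hx)).mul (hs' x hx)).hasDerivWithinAt using 1
  ring

theorem integral_deriv_sq_le_of_mul_nonneg (hab : a ≤ b)
    (hs : ∀ x ∈ Icc a b, HasDerivAt s (s' x) x) (hs' : ∀ x ∈ Ioo a b, HasDerivAt s' (s'' x) x)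
    (hcont : ContinuousOn s' (Icc a b))
    (hint : IntervalIntegrable (fun x => s x * s'' x) volume a b)
    (hnonneg : ∀ x ∈ Ioo a b, 0 ≤ s x * s'' x) :
    ∫ x in a..b, s' x ^ 2 ≤ s b * s' b - s a * s' a := by
  have hsq : IntervalIntegrable (fun x => s' x ^ 2) volume a b :=
    (hcont.pow 2).intervalIntegrable_of_Icc hab
  have hpos : 0 ≤ ∫ x in a..b, s x * s'' x := by
    rw [integral_of_le hab, integral_Ioc_eq_integral_Ioo]
    exact setIntegral_nonneg measurableSet_Ioo hnonneg
  rw [← integral_deriv_sq_add_mul_eq hab hs hs' hcont hint, integral_add hsq hint]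
  linarith

end EnergyIdentity

theorem eqOn_zero_of_integral_sq_nonpos {f : ℝ → ℝ} {a b : ℝ} (hab : a < b)
    (hf : ContinuousOn f (Icc a b)) (hint : ∫ x in a..b, f x ^ 2 ≤ 0) :
    EqOn f 0 (Icc a b) := by
  intro c hc
  by_contra hne
  have hpos : 0 < ∫ x in a..b, f x ^ 2 :=
    integral_pos hab (hf.pow 2) (fun x _ => sq_nonneg (f x)) ⟨c, hc, sq_pos_of_ne_zero hne⟩
  linarith

/-- No nontrivial solution of the defocusing static equation `s'' = s³/sin²x`
on `(0, π/2)` with `s(0) = 0` and Robin condition `s'(π/2) = -b s(π/2)`, `b ≥ 0`: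
any such solution vanishes identically on `[0, π/2]`. -/
theorem stmt_5 (s s' : ℝ → ℝ) (b : ℝ) (hb : 0 ≤ b)
    (hder : ∀ x ∈ Set.Icc 0 (π / 2), HasDerivAt s (s' x) x)
    (hder' : ∀ x ∈ Set.Ioo 0 (π / 2),
      HasDerivAt s' ((s x) ^ 3 / (Real.sin x) ^ 2) x)
    (hcont : ContinuousOn s' (Set.Icc 0 (π / 2)))
    (h0 : s 0 = 0)
    (hint : IntegrableOn (fun x => (s x) ^ 4 / (Real.sin x) ^ 2)
      (Set.Ioo 0 (π / 2)))
    (hRobin : s' (π / 2) = -b * s (π / 2)) :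
    ∀ x ∈ Set.Icc 0 (π / 2), s x = 0 := by
  have hpi : (0 : ℝ) < π / 2 := by positivity
  have hmul : (fun x => s x * (s x ^ 3 / sin x ^ 2)) = fun x => s x ^ 4 / sin x ^ 2 := by
    ext x; ring
  have hint' : IntervalIntegrable (fun x => s x * (s x ^ 3 / sin x ^ 2)) volume 0 (π / 2) := by
    rwa [hmul, intervalIntegrable_iff_integrableOn_Ioo_of_le hpi.le]
  have henergy := integral_deriv_sq_le_of_mul_nonneg hpi.le hder hder' hcont hint'
    (fun x _ => by rw [congrFun hmul x]; positivity)
  have hs' : EqOn s' 0 (Icc 0 (π / 2)) := by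
    refine eqOn_zero_of_integral_sq_nonpos hpi hcont (henergy.trans ?_)
    rw [h0, hRobin]
    nlinarith [sq_nonneg (s (π / 2))]
  intro x hx
  rw [← h0]
  refine constant_of_has_deriv_right_zero
    (fun y hy => (hder y hy).continuousAt.continuousWithinAt) (fun y hy => ?_) x hx
  simpa [hs' (Ico_subset_Icc_self hy)] using (hder y (Ico_subset_Icc_self hy)).hasDerivWithinAt
end

section
/- For b < -2/π, there exists a unique k > 0 satisfying k = -b·tanh(kπ/2); consequently the linearized operator around zero with Robin parameter b admits an exponentially growing mode ψ(x) = sinh(kx), which satisfies ψ'' = k²ψ, ψ(0) = 0, and ψ'(π/2) + b ψ(π/2) = 0. For b > -2/π no such k > 0 exists. -/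
/-!
With `x = kπ/2` the equation becomes the fixed-point problem `x = c tanh x` for `c = -bπ/2`.
Since `tanh x / x` decreases strictly on `(0, ∞)` (from `1` at the origin towards `0`), a positive
solution exists exactly when `c > 1`, and it is then unique; `x = arcosh c` and `x = c` bracket
it. The Robin condition for `sinh (k x)` at `π/2` is the equation itself multiplied by
`cosh (kπ/2)`.
-/

open Real Set

namespace Real

theorem hasDerivAt_tanh (x : ℝ) : HasDerivAt tanh (1 / cosh x ^ 2) x := by
  have h := (hasDerivAt_sinh x).div (hasDerivAt_cosh x) (cosh_pos x).ne'
  rw [show tanh = fun y => sinh y / cosh y from funext tanh_eq_sinh_div_cosh]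
  exact h.congr_deriv (by rw [← cosh_sq_sub_sinh_sq x]; ring)

theorem continuous_tanh : Continuous tanh :=
  continuous_iff_continuousAt.2 fun x => (hasDerivAt_tanh x).continuousAt

theorem tanh_pos {x : ℝ} (hx : 0 < x) : 0 < tanh x := by
  rw [tanh_eq_sinh_div_cosh]
  exact div_pos (sinh_pos_iff.2 hx) (cosh_pos x)

theorem tanh_lt_self {x : ℝ} (hx : 0 < x) : tanh x < x := by
  have hmono : StrictMonoOn (fun y => y - tanh y) (Ici 0) := by
    refine strictMonoOn_of_deriv_pos (convex_Ici 0)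
      (continuous_id.sub continuous_tanh).continuousOn fun y hy => ?_
    rw [interior_Ici, mem_Ioi] at hy
    have hd : HasDerivAt (fun y => y - tanh y) (1 - 1 / cosh y ^ 2) y :=
      (hasDerivAt_id' y).sub (hasDerivAt_tanh y)
    rw [hd.deriv, sub_pos, div_lt_one (by positivity)]
    exact one_lt_pow₀ (one_lt_cosh.2 hy.ne') two_ne_zero
  simpa using hmono self_mem_Ici hx.le hx

theorem self_lt_sinh_mul_cosh {x : ℝ} (hx : 0 < x) : x < sinh x * cosh x := by
  have h := self_lt_sinh_iff.2 (mul_pos two_pos hx)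
  rw [sinh_two_mul] at h
  linarith

theorem strictAntiOn_tanh_div_self : StrictAntiOn (fun x => tanh x / x) (Ioi 0) := by
  refine strictAntiOn_of_deriv_neg (convex_Ioi 0)
    (continuous_tanh.continuousOn.div continuousOn_id fun _ hx => ne_of_gt hx) fun x hx => ?_
  rw [interior_Ioi, mem_Ioi] at hx
  have hd : HasDerivAt (fun x => tanh x / x) ((1 / cosh x ^ 2 * x - tanh x * 1) / x ^ 2) x :=
    (hasDerivAt_tanh x).div (hasDerivAt_id' x) hx.ne'
  rw [hd.deriv, tanh_eq_sinh_div_cosh]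
  have hcosh := cosh_pos x
  have key := self_lt_sinh_mul_cosh hx
  apply div_neg_of_neg_of_pos _ (by positivity)
  rw [show 1 / cosh x ^ 2 * x - sinh x / cosh x * 1 = (x - sinh x * cosh x) / cosh x ^ 2 by
    field_simp]
  exact div_neg_of_neg_of_pos (by linarith) (by positivity)

end Real

theorem exists_pos_eq_mul_tanh {c : ℝ} (hc : 1 < c) : ∃ x, 0 < x ∧ x = c * tanh x := by
  have hx₀ : 0 < arcosh c := arcosh_pos hc
  have hlow : arcosh c < c * tanh (arcosh c) := by
    rw [tanh_eq_sinh_div_cosh, cosh_arcosh hc.le, mul_div_cancel₀ _ (by positivity)]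
    exact self_lt_sinh_iff.2 hx₀
  have hhigh : c * tanh c < c := mul_lt_of_lt_one_right (by positivity) (tanh_lt_one c)
  obtain ⟨x, hx, hgx⟩ := intermediate_value_uIcc (f := fun x => c * tanh x - x) (a := arcosh c)
    (b := c) (continuous_const.mul continuous_tanh |>.sub continuous_id).continuousOn
    (show (0 : ℝ) ∈ _ from mem_uIcc.2 (Or.inr ⟨by linarith, by linarith⟩))
  exact ⟨x, (lt_min hx₀ (by positivity)).trans_le hx.1, by linarith [hgx]⟩

theorem eq_of_eq_mul_tanh {c x y : ℝ} (hx : 0 < x) (hy : 0 < y) (hxc : x = c * tanh x)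
    (hyc : y = c * tanh y) : x = y := by
  refine strictAntiOn_tanh_div_self.injOn hx hy ?_
  rw [div_eq_div_iff hx.ne' hy.ne']
  linear_combination tanh x * hyc - tanh y * hxc

theorem mul_tanh_lt_self {c x : ℝ} (hc : c ≤ 1) (hx : 0 < x) : c * tanh x < x :=
  (mul_le_of_le_one_left (tanh_pos hx).le hc).trans_lt (tanh_lt_self hx)

theorem deriv_sinh_mul (k : ℝ) : deriv (fun y => sinh (k * y)) = fun y => k * cosh (k * y) :=
  funext fun y => by
    simpa [mul_comm] using ((hasDerivAt_id' y).const_mul k |>.sinh).deriv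

theorem deriv_mul_cosh_mul (k : ℝ) :
    deriv (fun y => k * cosh (k * y)) = fun y => k ^ 2 * sinh (k * y) :=
  funext fun y => by
    simpa [mul_comm, sq, mul_assoc] using
      ((hasDerivAt_id' y).const_mul k |>.cosh |>.const_mul k).deriv

theorem eq_mul_tanh_mul_iff {a s k : ℝ} (hs : s ≠ 0) :
    k = a * tanh (k * s) ↔ k * s = a * s * tanh (k * s) := by
  rw [← mul_left_inj' hs]
  constructor <;> intro h <;> linarith

/-- For `b < -2/π` there is a unique `k > 0` with `k = -b tanh(kπ/2)`; the
corresponding growing mode `ψ(x) = sinh(kx)` satisfies `ψ'' = k²ψ`, `ψ(0) = 0`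
and the Robin condition `ψ'(π/2) + b ψ(π/2) = 0`.  For `b > -2/π` no such
`k > 0` exists. -/
theorem stmt_8 (b : ℝ) :
    (b < -2 / π → ∃! k : ℝ, 0 < k ∧ k = -b * Real.tanh (k * (π / 2))) ∧
    (∀ k : ℝ, 0 < k → k = -b * Real.tanh (k * (π / 2)) →
      (∀ x : ℝ, deriv (deriv (fun y => Real.sinh (k * y))) x =
        k ^ 2 * Real.sinh (k * x)) ∧
      Real.sinh (k * 0) = 0 ∧
      deriv (fun y => Real.sinh (k * y)) (π / 2)
        + b * Real.sinh (k * (π / 2)) = 0) ∧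
    (-2 / π < b → ¬ ∃ k : ℝ, 0 < k ∧ k = -b * Real.tanh (k * (π / 2))) := by
  have hπ : 0 < π / 2 := by positivity
  refine ⟨fun hb => ?_, fun k _ hk => ?_, fun hb => ?_⟩
  · have hc : 1 < -b * (π / 2) := by
      have := (lt_div_iff₀ pi_pos).1 hb
      linarith
    obtain ⟨x, hx, hxc⟩ := exists_pos_eq_mul_tanh hc
    refine ⟨x / (π / 2), ⟨by positivity, ?_⟩, fun k ⟨hk, hkb⟩ => ?_⟩
    · rwa [eq_mul_tanh_mul_iff hπ.ne', div_mul_cancel₀ _ hπ.ne']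
    · exact eq_div_of_mul_eq hπ.ne'
        (eq_of_eq_mul_tanh (mul_pos hk hπ) hx ((eq_mul_tanh_mul_iff hπ.ne').1 hkb) hxc)
  · refine ⟨fun x => by rw [deriv_sinh_mul, deriv_mul_cosh_mul], by simp, ?_⟩
    rw [deriv_sinh_mul]
    show k * cosh (k * (π / 2)) + b * sinh (k * (π / 2)) = 0
    rw [tanh_eq_sinh_div_cosh] at hk
    nth_rw 1 [hk]
    rw [mul_assoc, div_mul_cancel₀ _ (cosh_pos _).ne']
    ring
  · have hc : -b * (π / 2) ≤ 1 := by
      have := (div_lt_iff₀ pi_pos).1 hb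
      linarith
    rintro ⟨k, hk, hkb⟩
    exact (mul_tanh_lt_self hc (mul_pos hk hπ)).ne ((eq_mul_tanh_mul_iff hπ.ne').1 hkb).symm
end

section
/- The function χ(x) = cos⁴x · ₂F₁(2 - σ/2, 2 + σ/2; 7/2; cos²x) satisfies the linearized equation -σ²χ = (1/tan²x)(tan²x · χ')' - 4χ/cos²x on (0, π/2), for the perturbation around the constant solution φ = √2 of the defocusing equation; when σ = 4 + 2j (j ∈ ℕ) the hypergeometric series terminates and χ is regular with χ(0) = 0 enforceable, giving eigenvalues σ² = (4 + 2j)². -/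
/-!
With `z = cos² x` and `χ = cos⁴ x · F(z)`, the operator `(1/tan²x)(tan²x χ')' - 4χ/cos²x` equals
`4 cos⁴ x · (z(1-z)F'' + (7/2 - 5z)F' - 4F)`, so the linearized equation is Gauss's hypergeometric
equation for `a = 2 - σ/2`, `b = 2 + σ/2`, `c = 7/2` (note `ab = 4 - σ²/4`). The `₂F₁` series
solves it on `|z| < 1` because its coefficients satisfy
`(n + 1)(c + n) tₙ₊₁ = (a + n)(b + n) tₙ`, which makes the series of the equation telescope.
Termwise differentiation is legitimate since for these parameters the recurrence ratio has
modulus at most `1` for large `n`, so the coefficients are bounded. For `σ = 4 + 2j` the first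
parameter is `-j`, whose Pochhammer symbol vanishes from order `j + 1` on.
-/

open Real

noncomputable def hyp2F1 (a b c x : ℝ) : ℝ :=
  ∑' n : ℕ, ((ascPochhammer ℝ n).eval a * (ascPochhammer ℝ n).eval b /
    (ascPochhammer ℝ n).eval c) * x ^ n / (n.factorial : ℝ)

open Filter Asymptotics Topology Set

def derivCoeff {R : Type*} [Semiring R] (c : ℕ → R) (n : ℕ) : R :=
  (n + 1) * c (n + 1)

noncomputable def powerSeriesSum {𝕜 : Type*} [NormedField 𝕜] (c : ℕ → 𝕜) (z : 𝕜) : 𝕜 :=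
  ∑' n, c n * z ^ n

section PowerSeries

variable {𝕜 : Type*} [RCLike 𝕜] {c : ℕ → 𝕜} {m : ℕ}

theorem summable_norm_mul_pow_of_isBigO (hc : c =O[atTop] fun n => (n : ℝ) ^ m) {z : 𝕜}
    (hz : ‖z‖ < 1) : Summable fun n => ‖c n * z ^ n‖ := by
  obtain ⟨r, hzr, hr⟩ := exists_between hz
  refine summable_of_isBigO_nat (summable_geometric_of_lt_one ((norm_nonneg z).trans hzr.le) hr) ?_
  have hnorm : (fun n => ‖c n * z ^ n‖) =O[atTop] fun n => (n : ℝ) ^ m * ‖z‖ ^ n := by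
    refine (hc.mul (isBigO_of_le (g := fun n => ‖z‖ ^ n) _ fun n => ?_)).norm_left
    simp
  exact hnorm.trans
    (isLittleO_pow_const_mul_const_pow_const_pow_of_norm_lt m (by simpa using hzr)).isBigO

theorem isBigO_natCast_add_const (k : 𝕜) :
    (fun n : ℕ => (n : 𝕜) + k) =O[atTop] fun n => (n : ℝ) := by
  refine IsBigO.of_bound (1 + ‖k‖) ?_
  filter_upwards [eventually_ge_atTop 1] with n hn
  have hn' : (1 : ℝ) ≤ n := by exact_mod_cast hn
  rw [Real.norm_natCast]
  calc ‖(n : 𝕜) + k‖ ≤ n + ‖k‖ := by simpa using norm_add_le (n : 𝕜) k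
    _ ≤ (1 + ‖k‖) * n := by nlinarith [norm_nonneg k]

theorem isBigO_natCast : (fun n : ℕ => (n : 𝕜)) =O[atTop] fun n => (n : ℝ) :=
  isBigO_of_le _ fun n => by simp

theorem isBigO_derivCoeff (hc : c =O[atTop] fun n => (n : ℝ) ^ m) :
    derivCoeff c =O[atTop] fun n => (n : ℝ) ^ (m + 1) := by
  have hsucc : (fun n : ℕ => ((n + 1 : ℕ) : ℝ)) =O[atTop] fun n => (n : ℝ) := by
    simpa using isBigO_natCast_add_const (1 : ℝ)
  have hshift : (fun n => c (n + 1)) =O[atTop] fun n => (n : ℝ) ^ m :=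
    (hc.comp_tendsto (tendsto_add_atTop_nat 1)).trans (hsucc.pow m)
  refine ((isBigO_natCast_add_const (1 : 𝕜)).mul hshift).congr_right fun n => ?_
  ring

theorem hasDerivAt_powerSeriesSum (hc : c =O[atTop] fun n => (n : ℝ) ^ m) {z : 𝕜}
    (hz : ‖z‖ < 1) : HasDerivAt (powerSeriesSum c) (powerSeriesSum (derivCoeff c) z) z := by
  obtain ⟨r, hzr, hr⟩ := exists_between hz
  have hr0 : 0 < r := (norm_nonneg z).trans_lt hzr
  have htail : HasDerivAt (fun y => ∑' n, c (n + 1) * y ^ (n + 1))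
      (powerSeriesSum (derivCoeff c) z) z := by
    refine hasDerivAt_tsum_of_isPreconnected (u := fun n => ‖derivCoeff c n‖ * r ^ n)
      (g' := fun n y => derivCoeff c n * y ^ n) (y₀ := 0) ?_ Metric.isOpen_ball
      (convex_ball (0 : 𝕜) r).isPreconnected (fun n y _ => ?_) (fun n y hy => ?_)
      (Metric.mem_ball_self hr0) (by simp) (mem_ball_zero_iff.2 hzr)
    · simpa [norm_mul, norm_pow, abs_of_pos hr0] using
        summable_norm_mul_pow_of_isBigO (isBigO_derivCoeff hc) (z := (r : 𝕜))
          (by simpa [abs_of_pos hr0] using hr)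
    · refine ((hasDerivAt_pow (n + 1) y).const_mul (c (n + 1))).congr_deriv ?_
      simp only [derivCoeff, Nat.add_sub_cancel, Nat.cast_add, Nat.cast_one]
      ring
    · rw [norm_mul, norm_pow]
      gcongr
      exact (mem_ball_zero_iff.1 hy).le
  refine (htail.const_add (c 0)).congr_of_eventuallyEq ?_
  filter_upwards [Metric.isOpen_ball.mem_nhds (mem_ball_zero_iff.2 hz)] with y hy
  rw [powerSeriesSum,
    (summable_norm_mul_pow_of_isBigO hc (mem_ball_zero_iff.1 hy)).of_norm.tsum_eq_zero_add]
  simp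

end PowerSeries

theorem eq_of_hasSum_sub_succ {G : Type*} [AddCommGroup G] [TopologicalSpace G]
    [IsTopologicalAddGroup G] [T2Space G] {A : ℕ → G} {s : G}
    (hs : HasSum (fun n => A n - A (n + 1)) s) (hA : Tendsto A atTop (𝓝 0)) : s = A 0 := by
  refine tendsto_nhds_unique hs.tendsto_sum_nat ?_
  simp_rw [Finset.sum_range_sub']
  simpa using tendsto_const_nhds.sub hA

theorem ordinaryHypergeometricCoefficient_succ_mul {𝕂 : Type*} [Field 𝕂] [CharZero 𝕂]
    (a b c : 𝕂) (n : ℕ) (hcn : c + n ≠ 0) :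
    (n + 1) * (c + n) * ordinaryHypergeometricCoefficient a b c (n + 1) =
      (a + n) * (b + n) * ordinaryHypergeometricCoefficient a b c n := by
  have hn : (n + 1 : 𝕂) ≠ 0 := by exact_mod_cast n.succ_ne_zero
  simp only [ordinaryHypergeometricCoefficient, ascPochhammer_succ_eval, Nat.factorial_succ,
    Nat.cast_mul, Nat.cast_add, Nat.cast_one, mul_inv]
  field_simp

theorem hypergeometric_ode {𝕜 : Type*} [RCLike 𝕜] {a b c : 𝕜} {t : ℕ → 𝕜} {m : ℕ}
    (hrec : ∀ n : ℕ, (n + 1) * (c + n) * t (n + 1) = (a + n) * (b + n) * t n)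
    (ht : t =O[atTop] fun n => (n : ℝ) ^ m) {z : 𝕜} (hz : ‖z‖ < 1) :
    z * (1 - z) * powerSeriesSum (derivCoeff (derivCoeff t)) z +
        (c - (a + b + 1) * z) * powerSeriesSum (derivCoeff t) z -
      a * b * powerSeriesSum t z = 0 := by
  have ht' := isBigO_derivCoeff ht
  have hsum (d : ℕ → 𝕜) {k : ℕ} (hd : d =O[atTop] fun n => (n : ℝ) ^ k) :
      HasSum (fun n => d n * z ^ n) (powerSeriesSum d z) :=
    (summable_norm_mul_pow_of_isBigO hd hz).of_norm.hasSum
  set e : ℕ → 𝕜 := fun n => n * (n + (a + b)) * t n - (1 - z) * derivCoeff t n * n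
  -- by the recurrence, the summands of the equation telescope
  have htel : ∀ n : ℕ, z * (1 - z) * (derivCoeff (derivCoeff t) n * z ^ n) +
      (c - (a + b + 1) * z) * (derivCoeff t n * z ^ n) - a * b * (t n * z ^ n) =
      e n * z ^ n - e (n + 1) * z ^ (n + 1) := by
    intro n
    simp only [e, derivCoeff, Nat.cast_add, Nat.cast_one]
    linear_combination z ^ n * hrec n
  have he : e =O[atTop] fun n => (n : ℝ) ^ (m + 2) := by
    have h1 := (isBigO_natCast.mul (isBigO_natCast_add_const (a + b))).mul ht
    have h2 := ((ht'.const_mul_left (1 - z)).mul (isBigO_natCast (𝕜 := 𝕜)))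
    refine (h1.congr_right fun n => ?_).sub (h2.congr_right fun n => ?_) <;> ring
  have hlim := (summable_norm_mul_pow_of_isBigO he hz).of_norm.tendsto_atTop_zero
  have key := eq_of_hasSum_sub_succ (A := fun n => e n * z ^ n)
    ((((hsum _ (isBigO_derivCoeff ht')).mul_left _).add ((hsum _ ht').mul_left _)).sub
      ((hsum _ ht).mul_left _) |>.congr_fun fun n => (htel n).symm) hlim
  simpa [e] using key

theorem isBigO_one_of_norm_succ_le {E : Type*} [SeminormedAddCommGroup E] {t : ℕ → E} {N : ℕ}
    (h : ∀ n ≥ N, ‖t (n + 1)‖ ≤ ‖t n‖) : t =O[atTop] fun _ => (1 : ℝ) := by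
  refine IsBigO.of_bound ‖t N‖ ((eventually_ge_atTop N).mono fun n hn => ?_)
  simpa using Nat.le_induction le_rfl (fun k hk ih => (h k hk).trans ih) n hn

theorem hyp2F1_eq_powerSeriesSum (a b c x : ℝ) :
    hyp2F1 a b c x = powerSeriesSum (ordinaryHypergeometricCoefficient a b c) x := by
  simp only [hyp2F1, powerSeriesSum, ordinaryHypergeometricCoefficient]
  congr 1 with n
  ring

theorem ordinaryHypergeometricCoefficient_recurrence (σ : ℝ) (n : ℕ) :
    (n + 1) * (7 / 2 + n) *
        ordinaryHypergeometricCoefficient (2 - σ / 2) (2 + σ / 2) (7 / 2) (n + 1) =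
      (2 - σ / 2 + n) * (2 + σ / 2 + n) *
        ordinaryHypergeometricCoefficient (2 - σ / 2) (2 + σ / 2) (7 / 2) n :=
  ordinaryHypergeometricCoefficient_succ_mul _ _ _ n (by positivity)

theorem isBigO_ordinaryHypergeometricCoefficient_linearized (σ : ℝ) :
    ordinaryHypergeometricCoefficient (2 - σ / 2) (2 + σ / 2) (7 / 2 : ℝ) =O[atTop]
      fun _ => (1 : ℝ) := by
  refine isBigO_one_of_norm_succ_le (N := ⌈σ ^ 2⌉₊ + 1) fun n hn => ?_
  have hσ : σ ^ 2 ≤ n :=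
    (Nat.le_ceil _).trans (by exact_mod_cast (by omega : ⌈σ ^ 2⌉₊ ≤ n))
  have h1 : (1 : ℝ) ≤ n := by exact_mod_cast (by omega : 1 ≤ n)
  have hpos : 0 < ((n : ℝ) + 1) * (7 / 2 + n) := by positivity
  -- `(2 - σ/2 + n)(2 + σ/2 + n) = (n + 2)² - σ²/4`, `(n + 1)(7/2 + n) = (n + 2)² + (n - 1)/2`
  have hratio : |(2 - σ / 2 + n) * (2 + σ / 2 + n)| ≤ (n + 1) * (7 / 2 + n) :=
    abs_le.2 ⟨by nlinarith, by nlinarith⟩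
  have hrec := congrArg abs (ordinaryHypergeometricCoefficient_recurrence σ n)
  rw [abs_mul _ (ordinaryHypergeometricCoefficient _ _ _ (n + 1)),
    abs_mul _ (ordinaryHypergeometricCoefficient _ _ _ n), abs_of_pos hpos] at hrec
  simp only [Real.norm_eq_abs]
  refine le_of_mul_le_mul_left ?_ hpos
  rw [hrec]
  exact mul_le_mul_of_nonneg_right hratio (abs_nonneg _)

theorem cos_sq_mem_Ioo {x : ℝ} (hx : x ∈ Ioo 0 (π / 2)) : cos x ^ 2 ∈ Ioo (0 : ℝ) 1 := by
  have hc : 0 < cos x := cos_pos_of_mem_Ioo ⟨by linarith [hx.1, pi_pos], hx.2⟩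
  have hs : 0 < sin x := sin_pos_of_pos_of_lt_pi hx.1 (by linarith [hx.2, pi_pos])
  constructor <;> nlinarith [sin_sq_add_cos_sq x]

theorem linearizedOperator_comp_cos_sq {F F' F'' : ℝ → ℝ}
    (hF : ∀ z ∈ Ioo (0 : ℝ) 1, HasDerivAt F (F' z) z)
    (hF' : ∀ z ∈ Ioo (0 : ℝ) 1, HasDerivAt F' (F'' z) z) {x : ℝ}
    (hx : x ∈ Ioo 0 (π / 2)) :
    1 / tan x ^ 2 * deriv (fun y => tan y ^ 2 * deriv (fun y => cos y ^ 4 * F (cos y ^ 2)) y) x -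
        4 * (cos x ^ 4 * F (cos x ^ 2)) / cos x ^ 2 =
      4 * cos x ^ 4 * (cos x ^ 2 * (1 - cos x ^ 2) * F'' (cos x ^ 2) +
        (7 / 2 - 5 * cos x ^ 2) * F' (cos x ^ 2) - 4 * F (cos x ^ 2)) := by
  have hu (y : ℝ) : HasDerivAt (fun y => cos y ^ 2) (-2 * sin y * cos y) y :=
    ((hasDerivAt_cos y).pow 2).congr_deriv (by ring)
  have hχ : ∀ y ∈ Ioo 0 (π / 2), HasDerivAt (fun y => cos y ^ 4 * F (cos y ^ 2))
      (4 * cos y ^ 3 * -sin y * F (cos y ^ 2) +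
        cos y ^ 4 * (F' (cos y ^ 2) * (-2 * sin y * cos y))) y := fun y hy =>
    ((hasDerivAt_cos y).fun_pow 4).fun_mul ((hF _ (cos_sq_mem_Ioo hy)).comp y (hu y))
      |>.congr_deriv (by simp only [Function.comp_apply]; push_cast; ring)
  have htan : (fun y => tan y ^ 2 * deriv (fun y => cos y ^ 4 * F (cos y ^ 2)) y) =ᶠ[𝓝 x]
      fun y => -2 * sin y ^ 3 * cos y * (2 * F (cos y ^ 2) + cos y ^ 2 * F' (cos y ^ 2)) := by
    filter_upwards [isOpen_Ioo.mem_nhds hx] with y hy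
    have hcy : cos y ≠ 0 := (cos_pos_of_mem_Ioo ⟨by linarith [hy.1, pi_pos], hy.2⟩).ne'
    rw [(hχ y hy).deriv, tan_eq_sin_div_cos]
    field_simp
    ring
  have hψ : HasDerivAt
      (fun y => -2 * sin y ^ 3 * cos y * (2 * F (cos y ^ 2) + cos y ^ 2 * F' (cos y ^ 2))) _ x :=
    ((((hasDerivAt_sin x).fun_pow 3).const_mul (-2)).fun_mul (hasDerivAt_cos x)).fun_mul
      ((((hF _ (cos_sq_mem_Ioo hx)).comp x (hu x)).const_mul 2).fun_add
        ((hu x).fun_mul ((hF' _ (cos_sq_mem_Ioo hx)).comp x (hu x))))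
  have hs : sin x ≠ 0 := (sin_pos_of_pos_of_lt_pi hx.1 (by linarith [hx.2, pi_pos])).ne'
  have hc : cos x ≠ 0 := (cos_pos_of_mem_Ioo ⟨by linarith [hx.1, pi_pos], hx.2⟩).ne'
  rw [htan.deriv_eq, hψ.deriv, tan_eq_sin_div_cos]
  field_simp
  linear_combination sin x ^ 2 * (8 * F (cos x ^ 2) + 28 * cos x ^ 2 * F' (cos x ^ 2) +
    8 * cos x ^ 4 * F'' (cos x ^ 2)) * sin_sq_add_cos_sq x

/-- `χ(x) = cos⁴x · ₂F₁(2 - σ/2, 2 + σ/2; 7/2; cos²x)` solves the linearized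
equation `-σ²χ = (1/tan²x)(tan²x χ')' - 4χ/cos²x` on `(0, π/2)` around the
constant solution `φ = √2`; for `σ = 4 + 2j` the hypergeometric series
terminates (the Pochhammer symbol of `2 - σ/2` vanishes from order `j+1` on)
and the eigenvalues are `σ² = (4 + 2j)²`. -/
theorem stmt_11 (σ : ℝ) (χ : ℝ → ℝ)
    (hχ : ∀ x, χ x = (Real.cos x) ^ 4 *
      hyp2F1 (2 - σ / 2) (2 + σ / 2) (7 / 2) ((Real.cos x) ^ 2)) :
    (∀ x ∈ Set.Ioo 0 (π / 2),
      -σ ^ 2 * χ x =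
        (1 / (Real.tan x) ^ 2) *
          deriv (fun y => (Real.tan y) ^ 2 * deriv χ y) x -
        4 * χ x / (Real.cos x) ^ 2) ∧
    (∀ j : ℕ, σ = 4 + 2 * (j : ℝ) →
      (∀ n : ℕ, j < n → (ascPochhammer ℝ n).eval (2 - σ / 2) = 0) ∧
      σ ^ 2 = (4 + 2 * (j : ℝ)) ^ 2) := by
  set t := ordinaryHypergeometricCoefficient (2 - σ / 2) (2 + σ / 2) (7 / 2 : ℝ)
  have ht : t =O[atTop] fun n => (n : ℝ) ^ 0 := by
    simpa only [pow_zero] using isBigO_ordinaryHypergeometricCoefficient_linearized σ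
  have hderiv {d : ℕ → ℝ} {k : ℕ} (hd : d =O[atTop] fun n => (n : ℝ) ^ k) :
      ∀ z ∈ Ioo (0 : ℝ) 1,
        HasDerivAt (powerSeriesSum d) (powerSeriesSum (derivCoeff d) z) z :=
    fun z hz => hasDerivAt_powerSeriesSum hd (by rw [norm_eq_abs, abs_of_pos hz.1]; exact hz.2)
  obtain rfl : χ = fun x => cos x ^ 4 * powerSeriesSum t (cos x ^ 2) :=
    funext fun x => by rw [hχ, hyp2F1_eq_powerSeriesSum]
  refine ⟨fun x hx => ?_, fun j hj => ⟨fun n hn => ?_, by rw [hj]⟩⟩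
  · have hz := cos_sq_mem_Ioo hx
    have hode := hypergeometric_ode (ordinaryHypergeometricCoefficient_recurrence σ) ht
      (z := cos x ^ 2) (by rw [norm_eq_abs, abs_of_pos hz.1]; exact hz.2)
    have hop := linearizedOperator_comp_cos_sq (hderiv ht) (hderiv (isBigO_derivCoeff ht)) hx
    linear_combination -hop - 4 * cos x ^ 4 * hode
  · exact (ascPochhammer_eval_eq_zero_iff n _).2 ⟨j, hn, by rw [hj]; ring⟩
end

section
/- For the singular static equation at the horizon: if s is a C^1 solution of (μ s')' - y(1 + y_H²)s - λ y_H³ s³ = 0 near y = y_H with μ(y) = y_H³ + y² y_H³ - y³(1 + y_H²) and s(y_H) = c, then necessarily s'(y_H) = -c·(1 + y_H²(1 + λc²)) / (y_H(3 + y_H²)). -/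
open Filter Set Topology

/-
Since `μ(y_H) = 0`, the difference quotient of `μ s'` at `y_H` is `(slope μ) · s'`, so
continuity of `s'` alone gives `(μ s')'(y_H⁻) = μ'(y_H) s'(y_H) = -y_H² (3 + y_H²) s'(y_H)`.
On the other hand the equation says that `(μ s')'` extends continuously to `y_H` with value
`y_H (1 + y_H²) c + λ y_H³ c³`, so this is also the left derivative of `μ s'` at `y_H`.
Equating the two values and solving for `s'(y_H)` gives the formula.
-/

theorem HasDerivWithinAt.mul_of_eq_zero {𝕜 : Type*} [NontriviallyNormedField 𝕜]
    {f h : 𝕜 → 𝕜} {f' a : 𝕜} {s : Set 𝕜} (hf : HasDerivWithinAt f f' s a) (hfa : f a = 0)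
    (hh : ContinuousWithinAt h s a) :
    HasDerivWithinAt (fun x => f x * h x) (f' * h a) s a := by
  rw [hasDerivWithinAt_iff_tendsto_slope] at hf ⊢
  have hslope : ∀ x, slope (fun x => f x * h x) a x = slope f a x * h x := by
    intro x
    simp only [slope_def_field, hfa, zero_mul, sub_zero]
    ring
  rw [funext hslope]
  exact hf.mul (hh.mono_left (nhdsWithin_mono _ sdiff_subset))

theorem hasDerivWithinAt_Iic_of_hasDerivAt_of_tendsto {E : Type*} [NormedAddCommGroup E]
    [NormedSpace ℝ E] {g g' : ℝ → E} {a b : ℝ} {L : E} (hba : b < a)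
    (hg : ∀ y ∈ Ioo b a, HasDerivAt g (g' y) y) (hcont : ContinuousWithinAt g (Iic a) a)
    (hlim : Tendsto g' (𝓝[<] a) (𝓝 L)) : HasDerivWithinAt g L (Iic a) a := by
  have hmem : Ioo b a ∈ 𝓝[<] a := Ioo_mem_nhdsLT hba
  refine hasDerivWithinAt_Iic_of_tendsto_deriv
    (fun y hy => (hg y hy).differentiableAt.differentiableWithinAt)
    (hcont.mono (Ioo_subset_Ioc_self.trans Ioc_subset_Iic_self)) hmem (hlim.congr' ?_)
  filter_upwards [hmem] with y hy
  exact (hg y hy).deriv.symm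

theorem stmt_13_general (yH c l ε : ℝ) (hyH : 0 < yH)
    (hε : 0 < ε) (μ : ℝ → ℝ)
    (hμ : ∀ y, μ y = yH ^ 3 + y ^ 2 * yH ^ 3 - y ^ 3 * (1 + yH ^ 2))
    (s s' : ℝ → ℝ)
    (hder : ∀ y ∈ Set.Ioc (yH - ε) yH, HasDerivAt s (s' y) y)
    (hcont : ContinuousOn s' (Set.Ioc (yH - ε) yH))
    (hODE : ∀ y ∈ Set.Ioo (yH - ε) yH,
      HasDerivAt (fun z => μ z * s' z)
        (y * (1 + yH ^ 2) * s y + l * yH ^ 3 * (s y) ^ 3) y)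
    (hc : s yH = c) :
    s' yH = -(c * (1 + yH ^ 2 * (1 + l * c ^ 2))) / (yH * (3 + yH ^ 2)) := by
  have hε' : yH - ε < yH := by linarith
  have hmem : yH ∈ Ioc (yH - ε) yH := ⟨hε', le_rfl⟩
  have hs : ContinuousAt s yH := (hder yH hmem).continuousAt
  have hs' : ContinuousWithinAt s' (Iic yH) yH :=
    (hcont yH hmem).mono_of_mem_nhdsWithin (Ioc_mem_nhdsLE hε')
  have hμ0 : μ yH = 0 := by rw [hμ]; ring
  have hμ' : HasDerivAt μ (-(yH ^ 2 * (3 + yH ^ 2))) yH := by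
    rw [funext hμ]
    refine ((((hasDerivAt_pow 2 yH).mul_const (yH ^ 3)).const_add (yH ^ 3)).sub
      ((hasDerivAt_pow 3 yH).mul_const (1 + yH ^ 2))).congr_deriv ?_
    norm_num
    ring
  have hleft := hμ'.hasDerivWithinAt.mul_of_eq_zero hμ0 hs'
  have hrhs : Tendsto (fun y => y * (1 + yH ^ 2) * s y + l * yH ^ 3 * s y ^ 3) (𝓝[<] yH)
      (𝓝 (yH * (1 + yH ^ 2) * c + l * yH ^ 3 * c ^ 3)) := by
    rw [← hc]
    exact ((((continuousAt_id.mul continuousAt_const).mul hs).add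
      (continuousAt_const.mul (hs.pow 3))).tendsto).mono_left nhdsWithin_le_nhds
  have hleft' := hasDerivWithinAt_Iic_of_hasDerivAt_of_tendsto hε' hODE
    hleft.continuousWithinAt hrhs
  have key := (uniqueDiffWithinAt_Iic yH).eq_deriv _ hleft hleft'
  rw [eq_div_iff (by positivity)]
  refine mul_left_cancel₀ hyH.ne' ?_
  linear_combination -key

/-- Regularity condition at the horizon: if `s` is a `C¹` solution of
`(μ s')' - y(1 + y_H²)s - λ y_H³ s³ = 0` near `y = y_H`, where
`μ(y) = y_H³(1 + y²) - y³(1 + y_H²)`, and `s(y_H) = c`, then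
`s'(y_H) = -c (1 + y_H²(1 + λ c²)) / (y_H (3 + y_H²))`. -/
theorem stmt_13 (yH c l ε : ℝ) (hyH : 0 < yH) (hl : l = -1 ∨ l = 1)
    (hε : 0 < ε) (μ : ℝ → ℝ)
    (hμ : ∀ y, μ y = yH ^ 3 + y ^ 2 * yH ^ 3 - y ^ 3 * (1 + yH ^ 2))
    (s s' : ℝ → ℝ)
    (hder : ∀ y ∈ Set.Ioc (yH - ε) yH, HasDerivAt s (s' y) y)
    (hcont : ContinuousOn s' (Set.Ioc (yH - ε) yH))
    (hODE : ∀ y ∈ Set.Ioo (yH - ε) yH,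
      HasDerivAt (fun z => μ z * s' z)
        (y * (1 + yH ^ 2) * s y + l * yH ^ 3 * (s y) ^ 3) y)
    (hc : s yH = c) :
    s' yH = -(c * (1 + yH ^ 2 * (1 + l * c ^ 2))) / (yH * (3 + yH ^ 2)) :=
  stmt_13_general yH c l ε hyH hε μ hμ s s' hder hcont hODE hc
end

section
/- Nonexistence of defocusing static solutions on SAdS with b ≥ 0: if s ∈ C^2([0, y_H]) satisfies (μ s')' - y(1 + y_H²)s - y_H³ s³ = 0 on (0, y_H) with μ(y) = y_H³(1 + y²) - y³(1 + y_H²), and the Robin condition s'(0) = b·s(0) with b ≥ 0 (so that -s(0)s'(0)·y_H³ ≤ 0), then s ≡ 0. -/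
/-!
Multiply the equation by `s`: the energy flux `F = μ s' s` satisfies
`F' = y (1 + y_H²) s² + y_H³ s⁴ + μ s'² ≥ 0` on `(0, y_H)`, since `μ > 0` there.
The Robin condition gives `F 0 = y_H³ b s(0)² ≥ 0`, while `F y_H = 0` because `μ` vanishes
at the horizon. A nondecreasing function that starts `≥ 0` and ends at `0` is constant,
so `F' ≡ 0`, which forces `s⁴ = 0` in the interior; continuity handles the endpoints.
-/

open Set Filter Topology

lemma sads_mu_pos {yH y : ℝ} (hy : y ∈ Ioo 0 yH) :
    0 < yH ^ 3 + y ^ 2 * yH ^ 3 - y ^ 3 * (1 + yH ^ 2) := by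
  obtain ⟨hy0, hyH⟩ := hy
  have hfactor : yH ^ 3 + y ^ 2 * yH ^ 3 - y ^ 3 * (1 + yH ^ 2)
      = (yH - y) * (yH ^ 2 + yH * y + y ^ 2 + y ^ 2 * yH ^ 2) := by ring
  rw [hfactor]
  have : 0 < yH := hy0.trans hyH
  exact mul_pos (sub_pos.mpr hyH) (by positivity)

lemma eqOn_zero_of_monotoneOn {F : ℝ → ℝ} {a b : ℝ} (hF : MonotoneOn F (Icc a b))
    (ha : 0 ≤ F a) (hb : F b ≤ 0) : EqOn F 0 (Icc a b) := fun _ hy =>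
  le_antisymm (hb.trans' (hF hy (right_mem_Icc.mpr (hy.1.trans hy.2)) hy.2))
    (ha.trans (hF (left_mem_Icc.mpr (hy.1.trans hy.2)) hy hy.1))

lemma hasDerivAt_eq_zero_of_nonneg_of_endpoints {F F' : ℝ → ℝ} {a b : ℝ}
    (hF : ContinuousOn F (Icc a b)) (hderiv : ∀ y ∈ Ioo a b, HasDerivAt F (F' y) y)
    (hF'_nonneg : ∀ y ∈ Ioo a b, 0 ≤ F' y) (ha : 0 ≤ F a) (hb : F b ≤ 0) :
    ∀ y ∈ Ioo a b, F' y = 0 := by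
  have hmono : MonotoneOn F (Icc a b) := by
    refine monotoneOn_of_deriv_nonneg (convex_Icc a b) hF ?_ ?_ <;> rw [interior_Icc]
    · exact fun y hy => (hderiv y hy).differentiableAt.differentiableWithinAt
    · exact fun y hy => (hderiv y hy).deriv ▸ hF'_nonneg y hy
  have hzero := eqOn_zero_of_monotoneOn hmono ha hb
  intro y hy
  have hlocal : F =ᶠ[𝓝 y] fun _ => 0 := by
    filter_upwards [Ioo_mem_nhds hy.1 hy.2] with z hz
    exact hzero (Ioo_subset_Icc_self hz)
  exact (hderiv y hy).unique ((hasDerivAt_const y 0).congr_of_eventuallyEq hlocal)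

/-- Nonexistence of defocusing static solutions on SAdS with `b ≥ 0`: any
solution of `(μ s')' - y(1 + y_H²)s - y_H³ s³ = 0` on `(0, y_H)` with
`μ(y) = y_H³(1 + y²) - y³(1 + y_H²)` and Robin condition `s'(0) = b s(0)`,
`b ≥ 0`, vanishes identically on `[0, y_H]`. -/
theorem stmt_15 (yH b : ℝ) (hyH : 0 < yH) (hb : 0 ≤ b) (μ : ℝ → ℝ)
    (hμ : ∀ y, μ y = yH ^ 3 + y ^ 2 * yH ^ 3 - y ^ 3 * (1 + yH ^ 2))
    (s s' : ℝ → ℝ)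
    (hder : ∀ y ∈ Set.Icc 0 yH, HasDerivAt s (s' y) y)
    (hcont : ContinuousOn s' (Set.Icc 0 yH))
    (hODE : ∀ y ∈ Set.Ioo 0 yH,
      HasDerivAt (fun z => μ z * s' z)
        (y * (1 + yH ^ 2) * s y + yH ^ 3 * (s y) ^ 3) y)
    (hRobin : s' 0 = b * s 0) :
    ∀ y ∈ Set.Icc 0 yH, s y = 0 := by
  have hμ_pos : ∀ y ∈ Ioo 0 yH, 0 < μ y := fun y hy => hμ y ▸ sads_mu_pos hy
  have hs_cont : ContinuousOn s (Icc 0 yH) := fun y hy =>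
    (hder y hy).continuousAt.continuousWithinAt
  have hμ_cont : Continuous μ := by rw [funext hμ]; fun_prop
  have henergy : ∀ y ∈ Ioo 0 yH, HasDerivAt (fun z => μ z * s' z * s z)
      (y * (1 + yH ^ 2) * s y ^ 2 + yH ^ 3 * s y ^ 4 + μ y * s' y ^ 2) y := fun y hy =>
    ((hODE y hy).mul (hder y (Ioo_subset_Icc_self hy))).congr_deriv (by ring)
  have hflux_left : 0 ≤ μ 0 * s' 0 * s 0 := by
    have : μ 0 * s' 0 * s 0 = yH ^ 3 * b * s 0 ^ 2 := by rw [hμ, hRobin]; ring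
    rw [this]; positivity
  have hflux_right : μ yH * s' yH * s yH ≤ 0 := by
    rw [show μ yH = 0 by rw [hμ]; ring, zero_mul, zero_mul]
  have hflux_zero := hasDerivAt_eq_zero_of_nonneg_of_endpoints
    ((hμ_cont.continuousOn.mul hcont).mul hs_cont) henergy
    (fun y hy => by have := (hμ_pos y hy).le; have := hy.1.le; positivity)
    hflux_left hflux_right
  have hs_zero : EqOn s 0 (Ioo 0 yH) := fun y hy => by
    have hflux := hflux_zero y hy
    have : 0 ≤ y * (1 + yH ^ 2) * s y ^ 2 := by have := hy.1.le; positivity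
    have : 0 ≤ μ y * s' y ^ 2 := mul_nonneg (hμ_pos y hy).le (sq_nonneg _)
    have : s y ^ 4 = 0 := by nlinarith [pow_pos hyH 3]
    exact pow_eq_zero_iff four_ne_zero |>.mp this
  exact hs_zero.of_subset_closure hs_cont continuousOn_const Ioo_subset_Icc_self
    (closure_Ioo hyH.ne).symm.subset
end
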